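/- arXiv:1705.06340 — 3 statements merged into one kernel-verified Lean document; each statement's English description precedes it below -/
import Mathlib

section
/- Let v be a quadratic vector field on ℂ² with components P, Q of degree 2, having four isolated nondegenerate singular points p₁,…,p₄ (points where P=Q=0 and the linearization Dv has nonzero determinant). Then ∑_{k=1}^4 1/det Dv(p_k) = 0. -/
/-!
No three of the four common zeros are collinear: a conic through three collinear points contains
the whole line, which would then consist of common zeros. Hence every conic through the four
points lies in the pencil spanned by the line pairs `S = L₀₁ L₂₃` and `T = L₀₂ L₁₃`, where `Lᵢⱼ`
vanishes on the line `pᵢpⱼ`: after subtracting a combination of `S` and `T` it also passes through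
a third point of `p₀p₁` and of `p₀p₂`, so it contains both lines and `p₃`, and vanishes.
So `P = u S + v T`, `Q = u' S + v' T`, and the Jacobian of `(P, Q)` is `u v' - v u'` times that
of `(S, T)`. At each of the four points the latter is, up to sign, the product of the (doubled)
areas of the three triangles having that point as a vertex, so the sum of the reciprocals is a
multiple of the alternating sum of the four triangle areas, which vanishes.
-/

open MvPolynomial

namespace EulerJacobi

section Plane

variable {K : Type*} [Field K]

def cross (u v : Fin 2 → K) : K := u 0 * v 1 - u 1 * v 0

def area (a b c : Fin 2 → K) : K := cross (b - a) (c - a)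

theorem smul_eq_smul_of_cross_eq_zero {u v : Fin 2 → K} (h : cross u v = 0) (i : Fin 2) :
    u i • v = v i • u := by
  unfold cross at h
  funext j
  fin_cases i <;> fin_cases j <;> simp <;>
    first | ring1 | linear_combination h | linear_combination -h

theorem exists_eq_smul_of_cross_eq_zero {u v : Fin 2 → K} (hu : u ≠ 0) (h : cross u v = 0) :
    ∃ t : K, v = t • u := by
  obtain ⟨i, hi⟩ := Function.ne_iff.1 hu
  refine ⟨v i / u i, ?_⟩
  rw [div_eq_inv_mul, mul_smul, ← smul_eq_smul_of_cross_eq_zero h, inv_smul_smul₀ hi]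

theorem area_smul_sub (a b c x : Fin 2 → K) :
    area a b c • (x - a) =
      cross (x - a) (c - a) • (b - a) + cross (b - a) (x - a) • (c - a) := by
  funext i
  fin_cases i <;> simp [area, cross] <;> ring

theorem exists_eq_add_smul_add_smul_of_area_ne_zero {a b c : Fin 2 → K}
    (h : area a b c ≠ 0) (x : Fin 2 → K) :
    ∃ s t : K, x = a + s • (b - a) + t • (c - a) := by
  refine ⟨cross (x - a) (c - a) / area a b c, cross (b - a) (x - a) / area a b c, ?_⟩
  simp only [div_eq_inv_mul, mul_smul, add_assoc, ← smul_add, ← area_smul_sub, inv_smul_smul₀ h]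
  abel

end Plane

section Quadratic

variable {R : Type*} [CommRing R]

theorem eq_quadratic_of_totalDegree_le_two {F : MvPolynomial (Fin 2) R} (h : F.totalDegree ≤ 2) :
    ∃ a b c d e f : R, F = C a + C b * X 0 + C c * X 1 + C d * X 0 ^ 2
      + C e * (X 0 * X 1) + C f * X 1 ^ 2 := by
  refine ⟨coeff 0 F, coeff (Finsupp.single 0 1) F, coeff (Finsupp.single 1 1) F,
    coeff (Finsupp.single 0 2) F, coeff (Finsupp.single 0 1 + Finsupp.single 1 1) F,
    coeff (Finsupp.single 1 2) F, ?_⟩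
  have hX01 : (X 0 * X 1 : MvPolynomial (Fin 2) R)
      = monomial (Finsupp.single 0 1 + Finsupp.single 1 1) 1 := by
    rw [X, X, monomial_mul, one_mul]
  ext m
  obtain ⟨i, j, rfl⟩ : ∃ i j : ℕ, m = Finsupp.single 0 i + Finsupp.single 1 j :=
    ⟨m 0, m 1, by ext k; fin_cases k <;> simp⟩
  simp only [coeff_add, coeff_C_mul, hX01, coeff_monomial, coeff_X, coeff_X_pow, coeff_C,
    mul_ite, mul_one, mul_zero]
  by_cases hij : i + j ≤ 2
  · have hi : i ≤ 2 := by omega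
    have hj : j ≤ 2 := by omega
    interval_cases i <;> interval_cases j <;> simp_all [Finsupp.ext_iff, Fin.forall_fin_two]
  · have hlt : F.totalDegree <
        ∑ k ∈ (Finsupp.single 0 i + Finsupp.single 1 j : Fin 2 →₀ ℕ).support,
          (Finsupp.single 0 i + Finsupp.single 1 j : Fin 2 →₀ ℕ) k := by
      rw [Finset.sum_subset (Finset.subset_univ _) fun k _ hk => Finsupp.notMem_support_iff.1 hk,
        Fin.sum_univ_two]
      simp; omega
    rw [coeff_eq_zero_of_totalDegree_lt hlt]
    simp [Finsupp.ext_iff, Fin.forall_fin_two]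
    split_ifs <;> first | omega | simp

theorem exists_eval_add_smul_add_smul_eq {F : MvPolynomial (Fin 2) R} (hF : F.totalDegree ≤ 2)
    (a u w : Fin 2 → R) : ∃ A B C D E G : R, ∀ s t : R,
      eval (a + s • u + t • w) F = A + B * s + C * t + D * s ^ 2 + E * s * t + G * t ^ 2 := by
  obtain ⟨c₀, c₁, c₂, c₃, c₄, c₅, rfl⟩ := eq_quadratic_of_totalDegree_le_two hF
  refine ⟨c₀ + c₁ * a 0 + c₂ * a 1 + c₃ * a 0 ^ 2 + c₄ * a 0 * a 1 + c₅ * a 1 ^ 2,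
    c₁ * u 0 + c₂ * u 1 + 2 * c₃ * a 0 * u 0 + c₄ * (a 0 * u 1 + a 1 * u 0) + 2 * c₅ * a 1 * u 1,
    c₁ * w 0 + c₂ * w 1 + 2 * c₃ * a 0 * w 0 + c₄ * (a 0 * w 1 + a 1 * w 0) + 2 * c₅ * a 1 * w 1,
    c₃ * u 0 ^ 2 + c₄ * u 0 * u 1 + c₅ * u 1 ^ 2,
    2 * c₃ * u 0 * w 0 + c₄ * (u 0 * w 1 + u 1 * w 0) + 2 * c₅ * u 1 * w 1,
    c₃ * w 0 ^ 2 + c₄ * w 0 * w 1 + c₅ * w 1 ^ 2, fun s t => ?_⟩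
  simp only [map_add, map_mul, map_pow, eval_C, eval_X, Pi.add_apply, Pi.smul_apply, smul_eq_mul]
  ring

end Quadratic

section Conic

variable {K : Type*} [Field K]

theorem quadratic_coeffs_eq_zero {A B C t₁ t₂ t₃ : K} (h₁₂ : t₁ ≠ t₂) (h₁₃ : t₁ ≠ t₃)
    (h₂₃ : t₂ ≠ t₃) (e₁ : A + B * t₁ + C * t₁ ^ 2 = 0) (e₂ : A + B * t₂ + C * t₂ ^ 2 = 0)
    (e₃ : A + B * t₃ + C * t₃ ^ 2 = 0) : A = 0 ∧ B = 0 ∧ C = 0 := by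
  have k₁₂ : B + C * (t₁ + t₂) = 0 := by
    refine (mul_eq_zero.1 ?_).resolve_left (sub_ne_zero.2 h₁₂)
    linear_combination e₁ - e₂
  have k₁₃ : B + C * (t₁ + t₃) = 0 := by
    refine (mul_eq_zero.1 ?_).resolve_left (sub_ne_zero.2 h₁₃)
    linear_combination e₁ - e₃
  have hC : C = 0 := by
    refine (mul_eq_zero.1 ?_).resolve_left (sub_ne_zero.2 h₂₃)
    linear_combination k₁₂ - k₁₃
  have hB : B = 0 := by linear_combination k₁₂ - (t₁ + t₂) * hC
  exact ⟨by linear_combination e₁ - t₁ * hB - t₁ ^ 2 * hC, hB, hC⟩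

variable {F : MvPolynomial (Fin 2) K}

theorem eval_add_smul_eq_zero_of_three_zeros {t₁ t₂ t₃ : K} (hF : F.totalDegree ≤ 2)
    (h₁₂ : t₁ ≠ t₂) (h₁₃ : t₁ ≠ t₃) (h₂₃ : t₂ ≠ t₃) {a u : Fin 2 → K}
    (e₁ : eval (a + t₁ • u) F = 0) (e₂ : eval (a + t₂ • u) F = 0)
    (e₃ : eval (a + t₃ • u) F = 0) (t : K) : eval (a + t • u) F = 0 := by
  obtain ⟨A, B, _, C, _, _, hq⟩ := exists_eval_add_smul_add_smul_eq hF a u 0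
  have hline : ∀ s : K, eval (a + s • u) F = A + B * s + C * s ^ 2 := fun s => by
    simpa using hq s 0
  obtain ⟨rfl, rfl, rfl⟩ := quadratic_coeffs_eq_zero h₁₂ h₁₃ h₂₃
    (hline t₁ ▸ e₁) (hline t₂ ▸ e₂) (hline t₃ ▸ e₃)
  simp [hline]

theorem eval_add_smul_add_smul_eq_zero_of_two_lines [CharZero K] {α β : K}
    (hF : F.totalDegree ≤ 2) (hα : α ≠ 0) (hβ : β ≠ 0) {a u w : Fin 2 → K}
    (hu : ∀ s : K, eval (a + s • u) F = 0)
    (hw : ∀ t : K, eval (a + t • w) F = 0) (hαβ : eval (a + α • u + β • w) F = 0) (s t : K) :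
    eval (a + s • u + t • w) F = 0 := by
  obtain ⟨A, B, C, D, E, G, hq⟩ := exists_eval_add_smul_add_smul_eq hF a u w
  have hu' : ∀ s : K, A + B * s + D * s ^ 2 = 0 := fun s => by
    have h := hq s 0
    simp only [zero_smul, add_zero, hu] at h
    linear_combination -h
  have hw' : ∀ t : K, A + C * t + G * t ^ 2 = 0 := fun t => by
    have h := hq 0 t
    simp only [zero_smul, add_zero, hw] at h
    linear_combination -h
  have h012 : (0 : K) ≠ 1 ∧ (0 : K) ≠ 2 ∧ (1 : K) ≠ 2 := by norm_num
  obtain ⟨rfl, rfl, rfl⟩ :=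
    quadratic_coeffs_eq_zero h012.1 h012.2.1 h012.2.2 (hu' 0) (hu' 1) (hu' 2)
  obtain ⟨-, rfl, rfl⟩ :=
    quadratic_coeffs_eq_zero h012.1 h012.2.1 h012.2.2 (hw' 0) (hw' 1) (hw' 2)
  have hE : E = 0 := by
    rw [hq] at hαβ
    refine (mul_eq_zero.1 ?_).resolve_right (mul_ne_zero hα hβ)
    linear_combination hαβ
  simp [hq, hE]

theorem area_ne_zero_of_finite_common_zeros [CharZero K] {P Q : MvPolynomial (Fin 2) K}
    (hP : P.totalDegree ≤ 2) (hQ : Q.totalDegree ≤ 2)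
    (hfin : {x | eval x P = 0 ∧ eval x Q = 0}.Finite) {a b c : Fin 2 → K}
    (ha : eval a P = 0 ∧ eval a Q = 0) (hb : eval b P = 0 ∧ eval b Q = 0)
    (hc : eval c P = 0 ∧ eval c Q = 0) (hab : a ≠ b) (hac : a ≠ c) (hbc : b ≠ c) :
    area a b c ≠ 0 := by
  intro h
  have hba : b - a ≠ 0 := sub_ne_zero.2 hab.symm
  obtain ⟨t, ht⟩ := exists_eq_smul_of_cross_eq_zero hba h
  obtain rfl : c = a + t • (b - a) := eq_add_of_sub_eq' ht
  have ht₀ : (0 : K) ≠ t := by rintro rfl; simp at hac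
  have ht₁ : (1 : K) ≠ t := by rintro rfl; simp at hbc
  have hline : ∀ {G : MvPolynomial (Fin 2) K}, G.totalDegree ≤ 2 → eval a G = 0 →
      eval b G = 0 → eval (a + t • (b - a)) G = 0 → ∀ s : K, eval (a + s • (b - a)) G = 0 :=
    fun hG ha hb hc => eval_add_smul_eq_zero_of_three_zeros hG zero_ne_one ht₀ ht₁
      (by simpa using ha) (by simpa using hb) hc
  refine Set.infinite_of_injective_forall_mem (f := fun s : K => a + s • (b - a))
    ((add_right_injective a).comp (smul_left_injective K hba)) (fun s => ?_) hfin
  exact ⟨hline hP ha.1 hb.1 hc.1 s, hline hQ ha.2 hb.2 hc.2 s⟩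

noncomputable def lineThrough (a b : Fin 2 → K) : MvPolynomial (Fin 2) K :=
  C (b 0 - a 0) * (X 1 - C (a 1)) - C (b 1 - a 1) * (X 0 - C (a 0))

@[simp]
theorem eval_lineThrough (a b x : Fin 2 → K) : eval x (lineThrough a b) = area a b x := by
  simp [lineThrough, area, cross]

theorem totalDegree_lineThrough_le (a b : Fin 2 → K) : (lineThrough a b).totalDegree ≤ 1 := by
  have hlin : ∀ (r : K) (i : Fin 2) (c : K), (C r * (X i - C c)).totalDegree ≤ 1 := fun r i c =>
    (totalDegree_mul _ _).trans <| by
      rw [totalDegree_C, zero_add]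
      exact (totalDegree_sub_C_le _ _).trans (totalDegree_X i).le
  exact (totalDegree_sub _ _).trans (max_le (hlin _ _ _) (hlin _ _ _))

noncomputable def lineProduct (a b c d : Fin 2 → K) : MvPolynomial (Fin 2) K :=
  lineThrough a b * lineThrough c d

@[simp]
theorem eval_lineProduct (a b c d x : Fin 2 → K) :
    eval x (lineProduct a b c d) = area a b x * area c d x := by
  simp [lineProduct]

theorem totalDegree_lineProduct_le (a b c d : Fin 2 → K) :
    (lineProduct a b c d).totalDegree ≤ 2 :=
  (totalDegree_mul _ _).trans (add_le_add (totalDegree_lineThrough_le a b)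
    (totalDegree_lineThrough_le c d))

section Pencil

variable [CharZero K] {F : MvPolynomial (Fin 2) K} {a b c d : Fin 2 → K}

theorem eq_zero_of_six_zeros (hF : F.totalDegree ≤ 2) (habc : area a b c ≠ 0)
    (habd : area a b d ≠ 0) (hacd : area a c d ≠ 0) (ha : eval a F = 0) (hb : eval b F = 0)
    (hc : eval c F = 0) (hd : eval d F = 0) (hb' : eval (a + (2 : K) • (b - a)) F = 0)
    (hc' : eval (a + (2 : K) • (c - a)) F = 0) : F = 0 := by
  have h012 : (0 : K) ≠ 1 ∧ (0 : K) ≠ 2 ∧ (1 : K) ≠ 2 := by norm_num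
  have hab := eval_add_smul_eq_zero_of_three_zeros hF h012.1 h012.2.1 h012.2.2
    (by simpa using ha) (by simpa using hb) hb'
  have hac := eval_add_smul_eq_zero_of_three_zeros hF h012.1 h012.2.1 h012.2.2
    (by simpa using ha) (by simpa using hc) hc'
  obtain ⟨α, β, rfl⟩ := exists_eq_add_smul_add_smul_of_area_ne_zero habc d
  have hα : α ≠ 0 := by
    rintro rfl
    exact hacd (by simp [area, cross]; ring)
  have hβ : β ≠ 0 := by
    rintro rfl
    exact habd (by simp [area, cross]; ring)
  refine MvPolynomial.funext fun x => ?_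
  obtain ⟨s, t, rfl⟩ := exists_eq_add_smul_add_smul_of_area_ne_zero habc x
  simpa using eval_add_smul_add_smul_eq_zero_of_two_lines hF hα hβ hab hac hd s t

theorem exists_eq_C_mul_lineProduct_add_C_mul_lineProduct (hF : F.totalDegree ≤ 2)
    (habc : area a b c ≠ 0) (habd : area a b d ≠ 0) (hacd : area a c d ≠ 0)
    (ha : eval a F = 0) (hb : eval b F = 0) (hc : eval c F = 0) (hd : eval d F = 0) :
    ∃ u v : K, F = C u * lineProduct a b c d + C v * lineProduct a c b d := by
  set b' := a + (2 : K) • (b - a)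
  set c' := a + (2 : K) • (c - a)
  -- `b'` lies on the line `ab` of `S` but on neither line of `T`, and `c'` the other way round.
  have hSb' : eval b' (lineProduct a b c d) = 0 := by
    rw [eval_lineProduct]; exact mul_eq_zero_of_left (by simp [b', area, cross]; ring) _
  have hTc' : eval c' (lineProduct a c b d) = 0 := by
    rw [eval_lineProduct]; exact mul_eq_zero_of_left (by simp [c', area, cross]; ring) _
  have hSc' : eval c' (lineProduct a b c d) = -2 * area a b c * area a c d := by
    simp [c', area, cross]; ring
  have hTb' : eval b' (lineProduct a c b d) = 2 * area a b c * area a b d := by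
    simp [b', area, cross]; ring
  have hdeg (u v : K) :
      (F - (C u * lineProduct a b c d + C v * lineProduct a c b d)).totalDegree ≤ 2 := by
    have hCmul : ∀ (u : K) (G : MvPolynomial (Fin 2) K), G.totalDegree ≤ 2 →
        (C u * G).totalDegree ≤ 2 := fun u G hG => by
      rw [C_mul']; exact (totalDegree_smul_le u G).trans hG
    exact (totalDegree_sub _ _).trans (max_le hF ((totalDegree_add _ _).trans
      (max_le (hCmul _ _ (totalDegree_lineProduct_le ..))
        (hCmul _ _ (totalDegree_lineProduct_le ..)))))
  refine ⟨eval c' F / eval c' (lineProduct a b c d), eval b' F / eval b' (lineProduct a c b d),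
    sub_eq_zero.1 (eq_zero_of_six_zeros (hdeg _ _) habc habd hacd ?_ ?_ ?_ ?_ ?_ ?_)⟩
  all_goals simp only [map_sub, map_add, map_mul, eval_C]
  · simp [ha, area, cross, mul_comm]
  · simp [hb, area, cross, mul_comm]
  · simp [hc, area, cross, mul_comm]
  · simp [hd, area, cross, mul_comm]
  · rw [hSb', hTb', hSc']
    field_simp
    ring
  · rw [hSc', hTc', hTb']
    field_simp
    ring

end Pencil

end Conic

section Jacobian

variable {R : Type*} [CommRing R]

noncomputable def jac (P Q : MvPolynomial (Fin 2) R) (x : Fin 2 → R) : R :=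
  eval x (pderiv 0 P) * eval x (pderiv 1 Q) - eval x (pderiv 1 P) * eval x (pderiv 0 Q)

theorem jac_pencil (S T : MvPolynomial (Fin 2) R) (u v u' v' : R) (x : Fin 2 → R) :
    jac (C u * S + C v * T) (C u' * S + C v' * T) x = (u * v' - v * u') * jac S T x := by
  simp [jac]
  ring

end Jacobian

section Quadrangle

variable {K : Type*} [Field K] (a b c d : Fin 2 → K)

theorem jac_lineProduct_at_a :
    jac (lineProduct a b c d) (lineProduct a c b d) a = area a b c * area a b d * area a c d := by
  simp [jac, lineProduct, lineThrough, area, cross, pderiv_X]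
  ring

theorem jac_lineProduct_at_b :
    jac (lineProduct a b c d) (lineProduct a c b d) b =
      -(area a b c * area a b d * area b c d) := by
  simp [jac, lineProduct, lineThrough, area, cross, pderiv_X]
  ring

theorem jac_lineProduct_at_c :
    jac (lineProduct a b c d) (lineProduct a c b d) c = area a b c * area a c d * area b c d := by
  simp [jac, lineProduct, lineThrough, area, cross, pderiv_X]
  ring

theorem jac_lineProduct_at_d :
    jac (lineProduct a b c d) (lineProduct a c b d) d =
      -(area a b d * area a c d * area b c d) := by
  simp [jac, lineProduct, lineThrough, area, cross, pderiv_X]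
  ring

theorem area_sub_area_add_area : area a b c - area a b d + area a c d = area b c d := by
  simp only [area, cross, Pi.sub_apply]
  ring

variable {a b c d}

theorem inv_jac_lineProduct_sum (habc : area a b c ≠ 0) (habd : area a b d ≠ 0)
    (hacd : area a c d ≠ 0) (hbcd : area b c d ≠ 0) :
    (jac (lineProduct a b c d) (lineProduct a c b d) a)⁻¹
      + (jac (lineProduct a b c d) (lineProduct a c b d) b)⁻¹
      + (jac (lineProduct a b c d) (lineProduct a c b d) c)⁻¹
      + (jac (lineProduct a b c d) (lineProduct a c b d) d)⁻¹ = 0 := by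
  rw [jac_lineProduct_at_a, jac_lineProduct_at_b, jac_lineProduct_at_c, jac_lineProduct_at_d]
  field_simp
  linear_combination (-1 : K) * area_sub_area_add_area a b c d

end Quadrangle

end EulerJacobi

open EulerJacobi

theorem euler_jacobi_relation_one_general
    (P Q : MvPolynomial (Fin 2) ℂ)
    (hP : P.totalDegree = 2) (hQ : Q.totalDegree = 2)
    (detDv : (Fin 2 → ℂ) → ℂ)
    (hdet : ∀ x, detDv x =
      eval x (pderiv 0 P) * eval x (pderiv 1 Q) -
      eval x (pderiv 1 P) * eval x (pderiv 0 Q))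
    (p : Fin 4 → (Fin 2 → ℂ))
    (hinj : Function.Injective p)
    (hzeros : ∀ x : Fin 2 → ℂ, (eval x P = 0 ∧ eval x Q = 0) ↔ ∃ k, x = p k) :
    ∑ k, 1 / detDv (p k) = 0 := by
  have hzero (k : Fin 4) : eval (p k) P = 0 ∧ eval (p k) Q = 0 := (hzeros _).2 ⟨k, rfl⟩
  have hfin : {x | eval x P = 0 ∧ eval x Q = 0}.Finite := by
    rw [show {x | eval x P = 0 ∧ eval x Q = 0} = Set.range p from
      Set.ext fun x => (hzeros x).trans (exists_congr fun _ => eq_comm)]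
    exact Set.finite_range p
  have harea (i j k : Fin 4) (hij : i < j) (hjk : j < k) : area (p i) (p j) (p k) ≠ 0 :=
    area_ne_zero_of_finite_common_zeros hP.le hQ.le hfin (hzero i) (hzero j) (hzero k)
      (hinj.ne hij.ne) (hinj.ne (hij.trans hjk).ne) (hinj.ne hjk.ne)
  have h012 := harea 0 1 2 (by decide) (by decide)
  have h013 := harea 0 1 3 (by decide) (by decide)
  have h023 := harea 0 2 3 (by decide) (by decide)
  have h123 := harea 1 2 3 (by decide) (by decide)
  obtain ⟨u, v, hPuv⟩ := exists_eq_C_mul_lineProduct_add_C_mul_lineProduct hP.le h012 h013 h023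
    (hzero 0).1 (hzero 1).1 (hzero 2).1 (hzero 3).1
  obtain ⟨u', v', hQuv⟩ := exists_eq_C_mul_lineProduct_add_C_mul_lineProduct hQ.le h012 h013 h023
    (hzero 0).2 (hzero 1).2 (hzero 2).2 (hzero 3).2
  have hJ (x : Fin 2 → ℂ) : detDv x = (u * v' - v * u') *
      jac (lineProduct (p 0) (p 1) (p 2) (p 3)) (lineProduct (p 0) (p 2) (p 1) (p 3)) x := by
    rw [hdet, ← jac_pencil, ← hPuv, ← hQuv, jac]
  simp only [Fin.sum_univ_four, hJ, one_div, mul_inv, ← mul_add]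
  rw [inv_jac_lineProduct_sum h012 h013 h023 h123, mul_zero]

/-- First Euler–Jacobi relation on spectra: the sum of reciprocals of the
Jacobian determinants at the four nondegenerate singular points of a
quadratic vector field vanishes. -/
theorem euler_jacobi_relation_one
    (P Q : MvPolynomial (Fin 2) ℂ)
    (hP : P.totalDegree = 2) (hQ : Q.totalDegree = 2)
    (detDv : (Fin 2 → ℂ) → ℂ)
    (hdet : ∀ x, detDv x =
      eval x (pderiv 0 P) * eval x (pderiv 1 Q) -
      eval x (pderiv 1 P) * eval x (pderiv 0 Q))
    (p : Fin 4 → (Fin 2 → ℂ))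
    (hinj : Function.Injective p)
    (hzeros : ∀ x : Fin 2 → ℂ, (eval x P = 0 ∧ eval x Q = 0) ↔ ∃ k, x = p k)
    (hnd : ∀ k, detDv (p k) ≠ 0) :
    ∑ k, 1 / detDv (p k) = 0 :=
  euler_jacobi_relation_one_general P Q hP hQ detDv hdet p hinj hzeros
end

section
/- Let v = P ∂/∂x + Q ∂/∂y with P = a₀x² + a₁xy + a₂y² − a₀x − a₂y and Q = a₃x² + a₄xy + a₅y² − a₃x − a₅y, and assume v has four isolated nondegenerate zeros. Then the fourth zero of v (besides (0,0), (1,0), (0,1)) is the point (−d₄/d₂, −d₄/d₃), where d_k = det Dv(p_k) for k = 2,3,4 and d₂, d₃ ≠ 0. -/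
open MvPolynomial

/-- For a quadratic vector field in normal form with four isolated
nondegenerate zeros, the fourth zero is `(−d₄/d₂, −d₄/d₃)`. -/
theorem fourth_zero_formula (a₀ a₁ a₂ a₃ a₄ a₅ : ℂ)
    (P Q : MvPolynomial (Fin 2) ℂ)
    (hP : P = C a₀ * X 0 ^ 2 + C a₁ * X 0 * X 1 + C a₂ * X 1 ^ 2
            - C a₀ * X 0 - C a₂ * X 1)
    (hQ : Q = C a₃ * X 0 ^ 2 + C a₄ * X 0 * X 1 + C a₅ * X 1 ^ 2
            - C a₃ * X 0 - C a₅ * X 1)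
    (detDv : (Fin 2 → ℂ) → ℂ)
    (hdet : ∀ x, detDv x =
      eval x (pderiv 0 P) * eval x (pderiv 1 Q) -
      eval x (pderiv 1 P) * eval x (pderiv 0 Q))
    (p₄ : Fin 2 → ℂ)
    (hdistinct : p₄ ≠ ![0, 0] ∧ p₄ ≠ ![1, 0] ∧ p₄ ≠ ![0, 1])
    (hzeros : ∀ x : Fin 2 → ℂ, (eval x P = 0 ∧ eval x Q = 0) ↔
      (x = ![0, 0] ∨ x = ![1, 0] ∨ x = ![0, 1] ∨ x = p₄))
    (d₁ d₂ d₃ d₄ : ℂ)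
    (hd₁ : d₁ = detDv ![0, 0]) (hd₂ : d₂ = detDv ![1, 0])
    (hd₃ : d₃ = detDv ![0, 1]) (hd₄ : d₄ = detDv p₄)
    (hnd : d₁ ≠ 0 ∧ d₂ ≠ 0 ∧ d₃ ≠ 0 ∧ d₄ ≠ 0) :
    p₄ = ![-d₄ / d₂, -d₄ / d₃] := by
  obtain ⟨h01, h02, h03⟩ := hdistinct
  obtain ⟨hn1, hn2, hn3, hn4⟩ := hnd
  set u := p₄ 0 with hu
  set v := p₄ 1 with hv
  have hp4 : p₄ = ![u, v] := by
    funext i; fin_cases i <;> simp [hu, hv]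
  -- the fourth point is a common zero
  have h4 := (hzeros p₄).mpr (Or.inr (Or.inr (Or.inr rfl)))
  have hPe : a₀*u^2 + a₁*u*v + a₂*v^2 - a₀*u - a₂*v = 0 := by
    have h := h4.1; rw [hP] at h
    simpa [← hu, ← hv] using h
  have hQe : a₃*u^2 + a₄*u*v + a₅*v^2 - a₃*u - a₅*v = 0 := by
    have h := h4.2; rw [hQ] at h
    simpa [← hu, ← hv] using h
  -- explicit Jacobian determinants
  have hD2 : d₂ = a₀*(a₄-a₅) - (a₁-a₂)*a₃ := by
    rw [hd₂, hdet, hP, hQ]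
    simp [pderiv_mul, pderiv_pow]
    ring
  have hD3 : d₃ = (a₁-a₀)*a₅ - a₂*(a₄-a₃) := by
    rw [hd₃, hdet, hP, hQ]
    simp [pderiv_mul, pderiv_pow]
    ring
  have hD4 : d₄ = (2*a₀*u + a₁*v - a₀)*(a₄*u + 2*a₅*v - a₅)
      - (a₁*u + 2*a₂*v - a₂)*(2*a₃*u + a₄*v - a₃) := by
    rw [hd₄, hdet, hP, hQ]
    simp [pderiv_mul, pderiv_pow, ← hu, ← hv]
    ring
  -- u ≠ 0
  have hune : u ≠ 0 := by
    intro h0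
    have hvne0 : v ≠ 0 := by
      intro hv0; exact h01 (by rw [hp4, h0, hv0])
    have hvne1 : v ≠ 1 := by
      intro hv1; exact h03 (by rw [hp4, h0, hv1])
    have ha2 : a₂ = 0 := by
      have h : a₂ * (v * (v - 1)) = 0 := by linear_combination hPe - a₀*h0*u - a₁*v*h0 + a₀*h0
      rcases mul_eq_zero.mp h with h' | h'
      · exact h'
      · rcases mul_eq_zero.mp h' with h'' | h''
        · exact absurd h'' hvne0
        · exact absurd (by linear_combination h'') hvne1
    have ha5 : a₅ = 0 := by
      have h : a₅ * (v * (v - 1)) = 0 := by linear_combination hQe - a₃*h0*u - a₄*v*h0 + a₃*h0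
      rcases mul_eq_zero.mp h with h' | h'
      · exact h'
      · rcases mul_eq_zero.mp h' with h'' | h''
        · exact absurd h'' hvne0
        · exact absurd (by linear_combination h'') hvne1
    have key : ∀ c : ℂ, eval ![0, c] P = 0 ∧ eval ![0, c] Q = 0 := by
      intro c
      rw [hP, hQ]
      constructor <;> simp [ha2, ha5]
    have hc : ∀ c : ℂ, c ≠ 0 → c ≠ 1 → ![0, c] = p₄ := by
      intro c hc0 hc1
      rcases (hzeros ![0, c]).mp (key c) with h | h | h | h
      · exact absurd (by simpa using congrFun h 1) hc0
      · have := congrFun h 0; norm_num at this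
      · exact absurd (by simpa using congrFun h 1) hc1
      · exact h
    have h2 := congrFun (hc 2 (by norm_num) (by norm_num)) 1
    have h3 := congrFun (hc 3 (by norm_num) (by norm_num)) 1
    simp only [Matrix.cons_val_one, Matrix.head_cons] at h2 h3
    rw [← hv] at h2 h3
    rw [← h2] at h3
    norm_num at h3
  -- v ≠ 0
  have hvne : v ≠ 0 := by
    intro h0
    have hune0 : u ≠ 0 := by
      intro hu0; exact h01 (by rw [hp4, h0, hu0])
    have hune1 : u ≠ 1 := by
      intro hu1; exact h02 (by rw [hp4, h0, hu1])
    have ha0 : a₀ = 0 := by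
      have h : a₀ * (u * (u - 1)) = 0 := by linear_combination hPe - a₁*u*h0 - a₂*v*h0 + a₂*h0
      rcases mul_eq_zero.mp h with h' | h'
      · exact h'
      · rcases mul_eq_zero.mp h' with h'' | h''
        · exact absurd h'' hune0
        · exact absurd (by linear_combination h'') hune1
    have ha3 : a₃ = 0 := by
      have h : a₃ * (u * (u - 1)) = 0 := by linear_combination hQe - a₄*u*h0 - a₅*v*h0 + a₅*h0
      rcases mul_eq_zero.mp h with h' | h'
      · exact h'
      · rcases mul_eq_zero.mp h' with h'' | h''
        · exact absurd h'' hune0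
        · exact absurd (by linear_combination h'') hune1
    have key : ∀ c : ℂ, eval ![c, 0] P = 0 ∧ eval ![c, 0] Q = 0 := by
      intro c
      rw [hP, hQ]
      constructor <;> simp [ha0, ha3]
    have hc : ∀ c : ℂ, c ≠ 0 → c ≠ 1 → ![c, 0] = p₄ := by
      intro c hc0 hc1
      rcases (hzeros ![c, 0]).mp (key c) with h | h | h | h
      · exact absurd (by simpa using congrFun h 0) hc0
      · exact absurd (by simpa using congrFun h 0) hc1
      · have := congrFun h 1; norm_num at this
      · exact h
    have h2 := congrFun (hc 2 (by norm_num) (by norm_num)) 0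
    have h3 := congrFun (hc 3 (by norm_num) (by norm_num)) 0
    simp only [Matrix.cons_val_zero] at h2 h3
    rw [← hu] at h2 h3
    rw [← h2] at h3
    norm_num at h3
  -- linear relations satisfied by the fourth point
  have hA : (a₀*a₅ - a₂*a₃)*(u-1) + (a₁*a₅ - a₂*a₄)*v = 0 := by
    have h : u * ((a₀*a₅ - a₂*a₃)*(u-1) + (a₁*a₅ - a₂*a₄)*v) = 0 := by
      linear_combination a₅ * hPe - a₂ * hQe
    exact (mul_eq_zero.mp h).resolve_left hune
  have hB : (a₁*a₃ - a₀*a₄)*u - (a₀*a₅ - a₂*a₃)*(v-1) = 0 := by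
    have h : v * ((a₁*a₃ - a₀*a₄)*u - (a₀*a₅ - a₂*a₃)*(v-1)) = 0 := by
      linear_combination a₃ * hPe - a₀ * hQe
    exact (mul_eq_zero.mp h).resolve_left hvne
  -- conclude
  have h1 : u = -d₄ / d₂ := by
    rw [eq_div_iff hn2]
    linear_combination u*hD2 + hD4 + 2*a₄*hPe - 2*a₁*hQe + (4*v-3)*hA - 2*hB
  have h2 : v = -d₄ / d₃ := by
    rw [eq_div_iff hn3]
    linear_combination v*hD3 + hD4 + 2*a₄*hPe - 2*a₁*hQe + (4*v-2)*hA - hB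
  rw [hp4, h1, h2]
end

section
/- Define F(w) = a₀ + a₁w + a₂w² and G(w) = w·F(w) − (a₃ + a₄w + a₅w²) = a₂w³ + (a₁ − a₅)w² + (a₀ − a₄)w − a₃. Then Res(F, G) = a₂·(a₀a₁a₄a₅-type polynomial) satisfies: a₂⁻¹·Res(F,G) = −(d₁d₂ + d₂d₃ + d₁d₃), where d₁ = −a₂a₃ + a₀a₅, d₂ = −a₁a₃ + a₂a₃ + a₀a₄ − a₀a₅, d₃ = a₂a₃ − a₂a₄ − a₀a₅ + a₁a₅ (assuming a₂ ≠ 0). -/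
theorem sylvester_det_eq_mul_sum_pairwise_products {R : Type*} [CommRing R]
    (a₀ a₁ a₂ a₃ a₄ a₅ : R) :
    Matrix.det
      !![a₂, a₁, a₀, 0, 0;
         0, a₂, a₁, a₀, 0;
         0, 0, a₂, a₁, a₀;
         a₂, a₁ - a₅, a₀ - a₄, -a₃, 0;
         0, a₂, a₁ - a₅, a₀ - a₄, -a₃] =
      a₂ * -((-a₂ * a₃ + a₀ * a₅) * (-a₁ * a₃ + a₂ * a₃ + a₀ * a₄ - a₀ * a₅) +
        (-a₁ * a₃ + a₂ * a₃ + a₀ * a₄ - a₀ * a₅) * (a₂ * a₃ - a₂ * a₄ - a₀ * a₅ + a₁ * a₅) +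
        (-a₂ * a₃ + a₀ * a₅) * (a₂ * a₃ - a₂ * a₄ - a₀ * a₅ + a₁ * a₅)) := by
  simp [Matrix.det_succ_row_zero, Fin.sum_univ_succ, Fin.succAbove]
  ring

/-- The resultant `Res(F,G)` of `F(w) = a₂w² + a₁w + a₀` and
`G(w) = a₂w³ + (a₁−a₅)w² + (a₀−a₄)w − a₃`, computed as the determinant of the
Sylvester matrix, satisfies `a₂⁻¹ · Res(F,G) = −(d₁d₂ + d₂d₃ + d₁d₃)`. -/
theorem resultant_FG_formula (a₀ a₁ a₂ a₃ a₄ a₅ : ℂ) (ha₂ : a₂ ≠ 0)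
    (d₁ d₂ d₃ : ℂ)
    (hd₁ : d₁ = -a₂ * a₃ + a₀ * a₅)
    (hd₂ : d₂ = -a₁ * a₃ + a₂ * a₃ + a₀ * a₄ - a₀ * a₅)
    (hd₃ : d₃ = a₂ * a₃ - a₂ * a₄ - a₀ * a₅ + a₁ * a₅)
    (ResFG : ℂ)
    (hRes : ResFG = Matrix.det
      !![a₂, a₁, a₀, 0, 0;
         0, a₂, a₁, a₀, 0;
         0, 0, a₂, a₁, a₀;
         a₂, a₁ - a₅, a₀ - a₄, -a₃, 0;
         0, a₂, a₁ - a₅, a₀ - a₄, -a₃]) :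
    a₂⁻¹ * ResFG = -(d₁ * d₂ + d₂ * d₃ + d₁ * d₃) := by
  subst hd₁ hd₂ hd₃ hRes
  rw [sylvester_det_eq_mul_sum_pairwise_products, inv_mul_cancel_left₀ ha₂]
end
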